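/- For every integer k ≥ 2 and each z ∈ {x, y}: every proper 3-coloring σ of the graph F_k with σ(u) = 1, σ(v) = 2 and σ(z) = 1 equals ψ. -/

import Mathlib

/-- Vertices of the gadget graph `F_k`: `u`, `v`, `x`, `y`, the vertices
`z_1, …, z_5` (`z j` models `z_{j+1}`), their primed copies `z'_1, …, z'_5`
(`z' j`), the vertices `y_1, …, y_k` (`Y i` models `y_{i+1}`), and the vertices
`x_{1,i}` (`p i`) and `x_{2,i}` (`q i`) for `1 ≤ i ≤ k−1`. -/
inductive FVert (k : ℕ) : Type
  | u : FVert k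
  | v : FVert k
  | x : FVert k
  | y : FVert k
  | z : Fin 5 → FVert k
  | z' : Fin 5 → FVert k
  | Y : Fin k → FVert k
  | p : Fin (k - 1) → FVert k
  | q : Fin (k - 1) → FVert k

/-- The edges of `F_k`: `z₁x`, `z'₁y`, `z₁v`, `z'₁v`, `uz₃`, `uz'₃`, `uz₅`, `uz'₅`;
the triangles `{z₁,z₂,z₃}`, `{z'₁,z'₂,z'₃}`, `{z₄,z₂,z₃}`, `{z'₄,z'₂,z'₃}`,
`{z₅,z₄,y}`, `{z'₅,z'₄,x}`; for each `1 ≤ i ≤ k−1` the triangles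
`{yᵢ, x_{1,i}, x_{2,i}}` and `{y_{i+1}, x_{1,i}, x_{2,i}}` together with the edge
`u x_{1,i}`; and the edges `x y_k`, `y y_k`, `v y_k`. -/
def FRel (k : ℕ) : FVert k → FVert k → Prop
  | .z j, .x => (j : ℕ) = 0
  | .z' j, .x => (j : ℕ) = 3 ∨ (j : ℕ) = 4
  | .z' j, .y => (j : ℕ) = 0
  | .z j, .y => (j : ℕ) = 3 ∨ (j : ℕ) = 4
  | .z j, .v => (j : ℕ) = 0
  | .z' j, .v => (j : ℕ) = 0
  | .u, .z j => (j : ℕ) = 2 ∨ (j : ℕ) = 4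
  | .u, .z' j => (j : ℕ) = 2 ∨ (j : ℕ) = 4
  | .z i, .z j =>
      ((i : ℕ) = 0 ∧ (j : ℕ) = 1) ∨ ((i : ℕ) = 0 ∧ (j : ℕ) = 2) ∨
      ((i : ℕ) = 1 ∧ (j : ℕ) = 2) ∨ ((i : ℕ) = 3 ∧ (j : ℕ) = 1) ∨
      ((i : ℕ) = 3 ∧ (j : ℕ) = 2) ∨ ((i : ℕ) = 4 ∧ (j : ℕ) = 3)
  | .z' i, .z' j =>
      ((i : ℕ) = 0 ∧ (j : ℕ) = 1) ∨ ((i : ℕ) = 0 ∧ (j : ℕ) = 2) ∨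
      ((i : ℕ) = 1 ∧ (j : ℕ) = 2) ∨ ((i : ℕ) = 3 ∧ (j : ℕ) = 1) ∨
      ((i : ℕ) = 3 ∧ (j : ℕ) = 2) ∨ ((i : ℕ) = 4 ∧ (j : ℕ) = 3)
  | .Y i, .p j => (i : ℕ) = (j : ℕ) ∨ (i : ℕ) = (j : ℕ) + 1
  | .Y i, .q j => (i : ℕ) = (j : ℕ) ∨ (i : ℕ) = (j : ℕ) + 1
  | .p i, .q j => (i : ℕ) = (j : ℕ)
  | .u, .p _ => True
  | .x, .Y i => (i : ℕ) = k - 1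
  | .y, .Y i => (i : ℕ) = k - 1
  | .v, .Y i => (i : ℕ) = k - 1
  | _, _ => False

/-- The gadget graph `F_k`. -/
def Fgraph (k : ℕ) : SimpleGraph (FVert k) := SimpleGraph.fromRel (FRel k)

/-- The coloring `ψ` of `F_k`; colors `1, 2, 3` are modelled as `0, 1, 2 : Fin 3`:
`ψ(u) = 1`, `ψ(v) = 2`, `ψ(x) = ψ(y) = 1`, `ψ(z₁) = ψ(z'₁) = ψ(z₄) = ψ(z'₄) = 3`,
`ψ(z₅) = ψ(z'₅) = ψ(z₃) = ψ(z'₃) = 2`, `ψ(z₂) = ψ(z'₂) = 1`, and `ψ(yᵢ) = 3`,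
`ψ(x_{1,i}) = 2`, `ψ(x_{2,i}) = 1` for all `i`. -/
def ψF (k : ℕ) : FVert k → Fin 3
  | .u => 0
  | .v => 1
  | .x => 0
  | .y => 0
  | .z j => ![2, 0, 1, 2, 1] j
  | .z' j => ![2, 0, 1, 2, 1] j
  | .Y _ => 2
  | .p _ => 1
  | .q _ => 0

/-!
Every vertex of `F_k` is forced: it has two neighbours that already carry distinct colours,
so it must take the third one. From `u`, `v` and one of `x`, `y` this forces the gadget
`z₁, …, z₅` and the other of `x`, `y`; the reflection `x ↔ y`, `zⱼ ↔ z'ⱼ` is an automorphism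
of `F_k`, so the primed gadget is the same computation. Then `x` and `v` force `y_k`, and going
down the ladder, `u` and `y_{i+1}` force `x_{1,i}`, then `x_{1,i}` and `y_{i+1}` force `x_{2,i}`,
and `x_{1,i}`, `x_{2,i}` force `y_i`.
-/

namespace FVert

variable {k : ℕ}

def swap : FVert k → FVert k
  | .x => .y
  | .y => .x
  | .z j => .z' j
  | .z' j => .z j
  | a => a

theorem swap_involutive : Function.Involutive (swap : FVert k → FVert k) := by
  intro a
  cases a <;> rfl

end FVert

theorem Fgraph_adj_swap {k : ℕ} {a b : FVert k} (h : (Fgraph k).Adj a b) :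
    (Fgraph k).Adj a.swap b.swap := by
  rw [Fgraph, SimpleGraph.fromRel_adj] at h ⊢
  refine ⟨FVert.swap_involutive.injective.ne h.1, ?_⟩
  have hrel : ∀ a b : FVert k, FRel k a.swap b.swap ↔ FRel k a b := by
    intro a b
    cases a <;> cases b <;> exact Iff.rfl
  simpa only [hrel] using h.2

theorem color_eq_of_adj_of_adj {V : Type*} {G : SimpleGraph V} {σ : V → Fin 3}
    (hσ : ∀ a b, G.Adj a b → σ a ≠ σ b) {a b c : V} {α β γ : Fin 3}
    (hca : G.Adj c a) (hcb : G.Adj c b) (ha : σ a = α) (hb : σ b = β)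
    (hαβγ : α ≠ β ∧ γ ≠ α ∧ γ ≠ β) : σ c = γ := by
  have := hσ c a hca
  have := hσ c b hcb
  omega

section ProperColoring

variable {k : ℕ} {σ : FVert k → Fin 3} (hσ : ∀ a b, (Fgraph k).Adj a b → σ a ≠ σ b)
include hσ

theorem comp_swap_proper :
    ∀ a b, (Fgraph k).Adj a b → (σ ∘ FVert.swap) a ≠ (σ ∘ FVert.swap) b :=
  fun _ _ h => hσ _ _ (Fgraph_adj_swap h)

theorem color_eq_of_colored_neighbors {a b c : FVert k} {α β γ : Fin 3}
    (ha : σ a = α) (hb : σ b = β)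
    (hca : (Fgraph k).Adj c a := by simp [Fgraph, FRel])
    (hcb : (Fgraph k).Adj c b := by simp [Fgraph, FRel])
    (hαβγ : α ≠ β ∧ γ ≠ α ∧ γ ≠ β := by decide) : σ c = γ :=
  color_eq_of_adj_of_adj hσ hca hcb ha hb hαβγ

theorem z_colors_of_x (hu : σ .u = 0) (hv : σ .v = 1) (hx : σ .x = 0) :
    (∀ j, σ (.z j) = ψF k (.z j)) ∧ σ .y = 0 := by
  have h0 : σ (.z 0) = 2 := color_eq_of_colored_neighbors hσ hx hv
  have h2 : σ (.z 2) = 1 := color_eq_of_colored_neighbors hσ hu h0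
  have h1 : σ (.z 1) = 0 := color_eq_of_colored_neighbors hσ h0 h2
  have h3 : σ (.z 3) = 2 := color_eq_of_colored_neighbors hσ h1 h2
  have h4 : σ (.z 4) = 1 := color_eq_of_colored_neighbors hσ hu h3
  refine ⟨fun j => ?_, ?_⟩
  · fin_cases j <;> assumption
  · exact color_eq_of_colored_neighbors hσ h3 h4

theorem x_y_colors (hu : σ .u = 0) (hv : σ .v = 1) {w : FVert k} (hw : w = .x ∨ w = .y)
    (hz : σ w = 0) : σ .x = 0 ∧ σ .y = 0 := by
  rcases hw with rfl | rfl
  · exact ⟨hz, (z_colors_of_x hσ hu hv hz).2⟩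
  · exact ⟨(z_colors_of_x (comp_swap_proper hσ) hu hv hz).2, hz⟩

theorem rung_colors (hu : σ .u = 0) (j : Fin (k - 1)) (hY : σ (.Y ⟨j + 1, by omega⟩) = 2) :
    σ (.p j) = 1 ∧ σ (.q j) = 0 ∧ σ (.Y ⟨j, by omega⟩) = 2 := by
  have hp : σ (.p j) = 1 := color_eq_of_colored_neighbors hσ hu hY
  have hq : σ (.q j) = 0 := color_eq_of_colored_neighbors hσ hp hY
  exact ⟨hp, hq, color_eq_of_colored_neighbors hσ hp hq⟩

theorem Y_colors (hu : σ .u = 0) (hv : σ .v = 1) (hx : σ .x = 0) (i : Fin k) :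
    σ (.Y i) = 2 := by
  obtain ⟨i, hi⟩ := i
  induction (Nat.le_sub_one_of_lt hi) using Nat.decreasingInduction with
  | self => exact color_eq_of_colored_neighbors hσ hx hv
  | of_succ j hj ih => exact (rung_colors hσ hu ⟨j, hj⟩ (ih _)).2.2

end ProperColoring

theorem stmt13_general (k : ℕ) (w : FVert k) (hw : w = .x ∨ w = .y)
    (σ : FVert k → Fin 3) (hproper : ∀ p q, (Fgraph k).Adj p q → σ p ≠ σ q)
    (hu : σ .u = 0) (hv : σ .v = 1) (hz : σ w = 0) :
    σ = ψF k := by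
  obtain ⟨hx, hy⟩ := x_y_colors hproper hu hv hw hz
  have hY := Y_colors hproper hu hv hx
  have hrung (j : Fin (k - 1)) := rung_colors hproper hu j (hY _)
  funext a
  cases a with
  | u => exact hu
  | v => exact hv
  | x => exact hx
  | y => exact hy
  | z j => exact (z_colors_of_x hproper hu hv hx).1 j
  | z' j => exact (z_colors_of_x (comp_swap_proper hproper) hu hv hy).1 j
  | Y i => exact hY i
  | p j => exact (hrung j).1
  | q j => exact (hrung j).2.1

/-- For every `k ≥ 2` and each `w ∈ {x, y}`: every proper 3-coloring `σ` of `F_k` with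
`σ(u) = 1`, `σ(v) = 2` and `σ(w) = 1` (colors `1, 2, 3` are modelled as
`0, 1, 2 : Fin 3`) is equal to `ψ`. -/
theorem stmt13 (k : ℕ) (hk : 2 ≤ k) (w : FVert k) (hw : w = .x ∨ w = .y)
    (σ : FVert k → Fin 3) (hproper : ∀ p q, (Fgraph k).Adj p q → σ p ≠ σ q)
    (hu : σ .u = 0) (hv : σ .v = 1) (hz : σ w = 0) :
    σ = ψF k :=
  stmt13_general k w hw σ hproper hu hv hz
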